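/- arXiv:2002.02302 — 7 statements merged into one kernel-verified Lean document; each statement's English description precedes it below -/
import Mathlib

section
/- Let Q⁻ and P⁻ be substochastic nonnegative matrices (all row sums ≤ 1) on a finite index set with Q⁻ ≤ P⁻ entrywise, and suppose E is a nonnegative vector satisfying E = 1 + P⁻E (so I - P⁻ is invertible with nonnegative inverse). Then the solution Ẽ of Ẽ = 1 + Q⁻Ẽ exists and satisfies Ẽ ≤ E componentwise. -/
open Filter Topology

/-- hitting-time monotonicity: if Q⁻ ≤ P⁻ are substochastic and
E = 1 + P⁻E with E ≥ 0, then the solution Ẽ of Ẽ = 1 + Q⁻Ẽ exists and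
satisfies Ẽ ≤ E componentwise. -/
theorem hitting_time_monotone {n : Type*} [Fintype n]
    (Qm Pm : Matrix n n ℝ)
    (hQ0 : ∀ i j, 0 ≤ Qm i j) (hP0 : ∀ i j, 0 ≤ Pm i j)
    (hQrow : ∀ i, ∑ j, Qm i j ≤ 1) (hProw : ∀ i, ∑ j, Pm i j ≤ 1)
    (hle : ∀ i j, Qm i j ≤ Pm i j)
    (E : n → ℝ) (hE0 : ∀ i, 0 ≤ E i)
    (hE : ∀ i, E i = 1 + ∑ j, Pm i j * E j) :
    ∃ Et : n → ℝ, (∀ i, Et i = 1 + ∑ j, Qm i j * Et j) ∧ ∀ i, Et i ≤ E i := by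
  classical
  set f : (n → ℝ) → (n → ℝ) := fun x i => 1 + ∑ j, Qm i j * x j with hf
  set x : ℕ → n → ℝ := fun k => f^[k] E with hx
  have hx0 : x 0 = E := rfl
  have hxsucc : ∀ k, x (k + 1) = f (x k) := fun k => Function.iterate_succ_apply' f k E
  have hrep : ∀ k i, x (k + 1) i = 1 + ∑ j, Qm i j * x k j := by
    intro k i; rw [hxsucc]
  -- nonnegativity
  have hnonneg : ∀ k i, 0 ≤ x k i := by
    intro k
    induction k with
    | zero => exact hE0
    | succ k ih =>
      intro i
      rw [hxsucc]
      have hs : 0 ≤ ∑ j, Qm i j * x k j :=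
        Finset.sum_nonneg fun j _ => mul_nonneg (hQ0 i j) (ih j)
      simpa [hf] using by linarith
  -- decreasing
  have hdec : ∀ k i, x (k + 1) i ≤ x k i := by
    intro k
    induction k with
    | zero =>
      intro i
      rw [hxsucc, hx0]
      have hs : ∑ j, Qm i j * E j ≤ ∑ j, Pm i j * E j :=
        Finset.sum_le_sum fun j _ => mul_le_mul_of_nonneg_right (hle i j) (hE0 j)
      have := hE i
      simp only [hf]
      linarith
    | succ k ih =>
      intro i
      rw [hrep (k + 1) i, hrep k i]
      have hs : ∑ j, Qm i j * x (k + 1) j ≤ ∑ j, Qm i j * x k j :=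
        Finset.sum_le_sum fun j _ => mul_le_mul_of_nonneg_left (ih j) (hQ0 i j)
      linarith
  have hanti : ∀ i, Antitone fun k => x k i := fun i =>
    antitone_nat_of_succ_le fun k => hdec k i
  have hbdd : ∀ i, BddBelow (Set.range fun k => x k i) := fun i =>
    ⟨0, fun y ⟨k, hk⟩ => hk ▸ hnonneg k i⟩
  set Et : n → ℝ := fun i => ⨅ k, x k i with hEt
  have htend : ∀ i, Tendsto (fun k => x k i) atTop (𝓝 (Et i)) := fun i =>
    tendsto_atTop_ciInf (hanti i) (hbdd i)
  refine ⟨Et, ?_, ?_⟩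
  · intro i
    have h1 : Tendsto (fun k => x (k + 1) i) atTop (𝓝 (Et i)) :=
      (htend i).comp (tendsto_add_atTop_nat 1)
    have h2 : Tendsto (fun k => x (k + 1) i) atTop
        (𝓝 (1 + ∑ j, Qm i j * Et j)) := by
      simp only [hrep]
      exact (tendsto_const_nhds.add
        (tendsto_finset_sum _ fun j _ => (htend j).const_mul (Qm i j)))
    exact tendsto_nhds_unique h1 h2
  · intro i
    have := ciInf_le (hbdd i) 0
    simpa [hEt, hx0] using this
end

section
/- Let X_1, ..., X_n be i.i.d. random variables on [0,1] with mean μ, and let X̄ be their average. Then with probability at least 1 - ρ, |X̄ - μ| ≤ sqrt(3 log(2/ρ) X̄ / n) + 3 log(2/ρ)/n. -/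
/-!
Convexity of `x ↦ exp (s * x)` on `[0, 1]` gives each summand a Poisson-type moment
generating function, `E[exp (s X)] ≤ exp (m (exp s - 1))`, and independence multiplies these
into the same bound for the sum `S`, with `M = n m` in place of `m`. Exponential Markov
inequalities at `s = ± 2L / t` then show that `|S - M| ≥ max (3L) (√(3LM))` has probability at
most `2 exp (-L)`, which is `ρ` for `L = log (2 / ρ)`. Finally, a deviation beyond the empirical
radius `√(3L S) + 3L` (the theorem's bound, multiplied by `n`) is also a deviation beyond this
deterministic radius.
-/

open MeasureTheory ProbabilityTheory Real Set

lemma exp_le_quadratic_of_le_one {x : ℝ} (h0 : 0 ≤ x) (h1 : x ≤ 1) :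
    exp x ≤ 1 + x + 3 / 4 * x ^ 2 := by
  have h := exp_bound' h0 h1 (n := 2) (by norm_num)
  norm_num [Finset.sum_range_succ] at h
  linarith

lemma exp_neg_le_quadratic_of_nonneg {x : ℝ} (hx : 0 ≤ x) :
    exp (-x) ≤ 1 - x + x ^ 2 / 2 := by
  rw [exp_neg, inv_le_iff_one_le_mul₀ (exp_pos x)]
  -- `(1 + x + x²/2) (1 - x + x²/2) = 1 + x⁴/4`
  nlinarith [quadratic_le_exp_of_nonneg hx, sq_nonneg (1 - x), sq_nonneg x]

lemma exp_mul_le_one_add_mul_of_mem_Icc (s : ℝ) {x : ℝ} (hx : x ∈ Icc (0 : ℝ) 1) :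
    exp (s * x) ≤ 1 + (exp s - 1) * x := by
  have h := convexOn_exp.2 (mem_univ 0) (mem_univ s) (sub_nonneg.2 hx.2) hx.1 (by ring)
  simp only [smul_eq_mul, mul_zero, zero_add, exp_zero, mul_one] at h
  rw [mul_comm s]
  linarith

section MGF

variable {Ω : Type*} [MeasurableSpace Ω] {μ : Measure Ω}

lemma mgf_le_exp_integral_mul_exp_sub_one [IsProbabilityMeasure μ] {X : Ω → ℝ}
    (hX : AEMeasurable X μ) (hX01 : ∀ᵐ ω ∂μ, X ω ∈ Icc (0 : ℝ) 1) (s : ℝ) :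
    mgf X μ s ≤ exp (μ[X] * (exp s - 1)) := by
  have hint : Integrable X μ := .of_mem_Icc 0 1 hX hX01
  calc mgf X μ s ≤ ∫ ω, 1 + (exp s - 1) * X ω ∂μ :=
        integral_mono_ae (integrable_exp_mul_of_mem_Icc hX hX01)
          ((integrable_const 1).add (hint.const_mul _))
          (hX01.mono fun ω hω ↦ exp_mul_le_one_add_mul_of_mem_Icc s hω)
    _ = 1 + μ[X] * (exp s - 1) := by
        rw [integral_add (integrable_const 1) (hint.const_mul _), integral_const_mul]
        simp [mul_comm]
    _ ≤ exp (μ[X] * (exp s - 1)) := by linarith [add_one_le_exp (μ[X] * (exp s - 1))]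

lemma ProbabilityTheory.iIndepFun.mgf_sum_le_exp {ι : Type*} {X : ι → Ω → ℝ}
    (hindep : iIndepFun X μ) (hmeas : ∀ i, AEMeasurable (X i) μ)
    (hX01 : ∀ i, ∀ᵐ ω ∂μ, X i ω ∈ Icc (0 : ℝ) 1)
    (s : Finset ι) (t : ℝ) :
    mgf (∑ i ∈ s, X i) μ t ≤ exp ((∑ i ∈ s, μ[X i]) * (exp t - 1)) := by
  have := hindep.isProbabilityMeasure
  rw [hindep.mgf_sum₀ hmeas, Finset.sum_mul, exp_sum]
  exact Finset.prod_le_prod (fun _ _ ↦ mgf_nonneg)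
    fun i _ ↦ mgf_le_exp_integral_mul_exp_sub_one (hmeas i) (hX01 i) t

end MGF

section PoissonTail

variable {Ω : Type*} [MeasurableSpace Ω] {μ : Measure Ω} [IsFiniteMeasure μ] {Y : Ω → ℝ}
  {M L t : ℝ}

lemma measureReal_add_le_le_exp_neg (hM : 0 ≤ M) (hL : 0 ≤ L) (ht : 0 < t) (h2L : 2 * L ≤ t)
    (hLM : 3 * L * M ≤ t ^ 2) (hint : ∀ s, Integrable (fun ω ↦ exp (s * Y ω)) μ)
    (hmgf : ∀ s, mgf Y μ s ≤ exp (M * (exp s - 1))) :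
    μ.real {ω | M + t ≤ Y ω} ≤ exp (-L) := by
  set s := 2 * L / t
  have hs0 : 0 ≤ s := by positivity
  have hs1 : s ≤ 1 := (div_le_one ht).2 h2L
  have hst : s * t = 2 * L := div_mul_cancel₀ _ ht.ne'
  have hMs : 3 / 4 * M * s ^ 2 ≤ L := by
    have : 3 / 4 * M * s ^ 2 * t ^ 2 ≤ L * t ^ 2 := by
      rw [show 3 / 4 * M * s ^ 2 * t ^ 2 = L * (3 * L * M) by
        linear_combination (3 / 4 * M * (s * t + 2 * L)) * hst]
      exact mul_le_mul_of_nonneg_left hLM hL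
    exact le_of_mul_le_mul_right this (by positivity)
  calc μ.real {ω | M + t ≤ Y ω} ≤ exp (-s * (M + t)) * mgf Y μ s :=
        measure_ge_le_exp_mul_mgf _ hs0 (hint s)
    _ ≤ exp (-s * (M + t)) * exp (M * (exp s - 1)) := by gcongr; exact hmgf s
    _ = exp (-s * (M + t) + M * (exp s - 1)) := (exp_add _ _).symm
    _ ≤ exp (-L) := by
        gcongr
        nlinarith [mul_le_mul_of_nonneg_left (exp_le_quadratic_of_le_one hs0 hs1) hM]

lemma measureReal_le_sub_le_exp_neg (hM : 0 ≤ M) (hL : 0 ≤ L) (ht : 0 < t)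
    (hLM : 2 * L * M ≤ t ^ 2) (hint : ∀ s, Integrable (fun ω ↦ exp (s * Y ω)) μ)
    (hmgf : ∀ s, mgf Y μ s ≤ exp (M * (exp s - 1))) :
    μ.real {ω | Y ω ≤ M - t} ≤ exp (-L) := by
  set s := 2 * L / t
  have hs0 : 0 ≤ s := by positivity
  have hst : s * t = 2 * L := div_mul_cancel₀ _ ht.ne'
  have hMs : M * s ^ 2 / 2 ≤ L := by
    have : M * s ^ 2 / 2 * t ^ 2 ≤ L * t ^ 2 := by
      rw [show M * s ^ 2 / 2 * t ^ 2 = L * (2 * L * M) by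
        linear_combination (M / 2 * (s * t + 2 * L)) * hst]
      exact mul_le_mul_of_nonneg_left hLM hL
    exact le_of_mul_le_mul_right this (by positivity)
  calc μ.real {ω | Y ω ≤ M - t} ≤ exp (-(-s) * (M - t)) * mgf Y μ (-s) :=
        measure_le_le_exp_mul_mgf _ (neg_nonpos.2 hs0) (hint (-s))
    _ ≤ exp (-(-s) * (M - t)) * exp (M * (exp (-s) - 1)) := by gcongr; exact hmgf (-s)
    _ = exp (s * (M - t) + M * (exp (-s) - 1)) := by rw [neg_neg, exp_add]
    _ ≤ exp (-L) := by
        gcongr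
        nlinarith [mul_le_mul_of_nonneg_left (exp_neg_le_quadratic_of_nonneg hs0) hM]

lemma measureReal_le_abs_sub_le_two_mul_exp_neg (hM : 0 ≤ M) (hL : 0 < L)
    (hint : ∀ s, Integrable (fun ω ↦ exp (s * Y ω)) μ)
    (hmgf : ∀ s, mgf Y μ s ≤ exp (M * (exp s - 1))) :
    μ.real {ω | max (3 * L) √(3 * L * M) ≤ |Y ω - M|} ≤ 2 * exp (-L) := by
  set t := max (3 * L) √(3 * L * M)
  have h3L : 3 * L ≤ t := le_max_left _ _
  have hLM : 3 * L * M ≤ t ^ 2 := (sqrt_le_left (by positivity)).1 (le_max_right _ _)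
  have ht : 0 < t := by positivity
  calc μ.real {ω | t ≤ |Y ω - M|}
      ≤ μ.real ({ω | M + t ≤ Y ω} ∪ {ω | Y ω ≤ M - t}) := by
        refine measureReal_mono (fun ω hω ↦ ?_)
        rcases le_abs'.1 (show t ≤ |Y ω - M| from hω) with h | h
        · exact Or.inr (show Y ω ≤ M - t by linarith)
        · exact Or.inl (show M + t ≤ Y ω by linarith)
    _ ≤ μ.real {ω | M + t ≤ Y ω} + μ.real {ω | Y ω ≤ M - t} := measureReal_union_le _ _
    _ ≤ exp (-L) + exp (-L) := by
        gcongr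
        · exact measureReal_add_le_le_exp_neg hM hL.le ht (by linarith) hLM hint hmgf
        · exact measureReal_le_sub_le_exp_neg hM hL.le ht (by nlinarith) hint hmgf
    _ = 2 * exp (-L) := by ring

end PoissonTail

lemma max_le_abs_sub_of_sqrt_add_lt {y m b : ℝ} (hb : 0 ≤ b)
    (h : √(3 * b * y) + 3 * b < |y - m|) : max (3 * b) √(3 * b * m) ≤ |y - m| := by
  set d := |y - m|
  have h3b : 3 * b < d := by linarith [sqrt_nonneg (3 * b * y)]
  have hsq : 3 * b * y < (d - 3 * b) ^ 2 := (sqrt_lt' (by linarith)).1 (by linarith)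
  have hyd : m - d ≤ y := by linarith [neg_abs_le (y - m)]
  refine max_le h3b.le ((sqrt_le_left (by linarith)).2 ?_)
  nlinarith [mul_le_mul_of_nonneg_left hyd (by positivity : (0 : ℝ) ≤ 3 * b)]

lemma sqrt_add_lt_abs_sub_of_div {n S L m : ℝ} (hn : 0 < n)
    (h : √(3 * L * (S / n) / n) + 3 * L / n < |S / n - m|) :
    √(3 * L * S) + 3 * L < |S - n * m| := by
  have hsqrt : √(3 * L * (S / n) / n) = √(3 * L * S) / n := by
    rw [show 3 * L * (S / n) / n = 3 * L * S / n ^ 2 by ring, sqrt_div' _ (by positivity),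
      sqrt_sq hn.le]
  have habs : |S / n - m| = |S - n * m| / n := by
    rw [show S / n - m = (S - n * m) / n by field_simp, abs_div, abs_of_pos hn]
  rwa [hsqrt, habs, ← add_div, div_lt_div_iff_of_pos_right hn] at h

lemma ofReal_one_sub_le_of_measure_compl_le {Ω : Type*} [MeasurableSpace Ω] {μ : Measure Ω}
    [IsProbabilityMeasure μ] {s : Set Ω} {ρ : ℝ} (hρ : 0 ≤ ρ)
    (h : μ sᶜ ≤ ENNReal.ofReal ρ) :
    ENNReal.ofReal (1 - ρ) ≤ μ s := by
  rw [ENNReal.ofReal_sub _ hρ, ENNReal.ofReal_one, tsub_le_iff_right]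
  calc 1 = μ (s ∪ sᶜ) := by simp
    _ ≤ μ s + μ sᶜ := measure_union_le _ _
    _ ≤ μ s + ENNReal.ofReal ρ := by gcongr

/-- multiplicative Chernoff bound (Kleinberg et al. 2008, Lemma 4.9):
for n i.i.d. [0,1]-valued random variables with mean m and average X̄, with
probability at least 1 - ρ, |X̄ - m| ≤ sqrt(3 log(2/ρ) X̄ / n) + 3 log(2/ρ)/n. -/
theorem multiplicative_chernoff {Ω : Type*} [MeasurableSpace Ω]
    (μ : Measure Ω) [IsProbabilityMeasure μ]
    (n : ℕ) (hn : 0 < n) (X : Fin n → Ω → ℝ)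
    (hmeas : ∀ i, Measurable (X i))
    (hindep : iIndepFun X μ)
    (hident : ∀ i, μ.map (X i) = μ.map (X ⟨0, hn⟩))
    (hbound : ∀ i, ∀ᵐ ω ∂μ, X i ω ∈ Set.Icc (0 : ℝ) 1)
    (m : ℝ) (hm : m = μ[X ⟨0, hn⟩])
    (ρ : ℝ) (hρ : ρ ∈ Set.Ioo (0 : ℝ) 1) :
    ENNReal.ofReal (1 - ρ) ≤
      μ {ω | |(∑ i, X i ω) / n - m| ≤
        Real.sqrt (3 * Real.log (2 / ρ) * ((∑ i, X i ω) / n) / n)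
          + 3 * Real.log (2 / ρ) / n} := by
  obtain ⟨hρ0, hρ1⟩ := hρ
  set L := log (2 / ρ)
  have hL : 0 < L := log_pos (by rw [lt_div_iff₀ hρ0]; linarith)
  have hρL : 2 * exp (-L) = ρ := by
    rw [exp_neg, exp_log (by positivity), inv_div]; field_simp
  have hn' : (0 : ℝ) < n := by exact_mod_cast hn
  have hm0 : 0 ≤ m := hm ▸ integral_nonneg_of_ae ((hbound _).mono fun _ h ↦ h.1)
  have hmean : ∑ i, μ[X i] = n * m := by
    have hi : ∀ i, μ[X i] = m := fun i ↦ hm ▸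
      (IdentDistrib.integral_eq ⟨(hmeas i).aemeasurable, (hmeas _).aemeasurable, hident i⟩)
    simp [hi]
  have htail := measureReal_le_abs_sub_le_two_mul_exp_neg (Y := ∑ i, X i) (by positivity) hL
    (fun t ↦ hindep.integrable_exp_mul_sum hmeas
      fun i _ ↦ integrable_exp_mul_of_mem_Icc (hmeas i).aemeasurable (hbound i))
    (fun t ↦ hmean ▸ hindep.mgf_sum_le_exp (fun i ↦ (hmeas i).aemeasurable) hbound _ t)
  refine ofReal_one_sub_le_of_measure_compl_le hρ0.le ?_
  calc _ ≤ μ {ω | max (3 * L) √(3 * L * (n * m)) ≤ |(∑ i, X i) ω - n * m|} := by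
        refine measure_mono fun ω hbad ↦ ?_
        show _ ≤ |(∑ i, X i) ω - n * m|
        rw [Finset.sum_apply]
        exact max_le_abs_sub_of_sqrt_add_lt hL.le
          (sqrt_add_lt_abs_sub_of_div hn' (not_le.1 hbad))
    _ = ENNReal.ofReal (μ.real _) := by rw [ofReal_measureReal]
    _ ≤ ENNReal.ofReal ρ := ENNReal.ofReal_le_ofReal (hρL ▸ htail)
end

section
/- Fix a sequence x_1, x_2, ..., x_T taking values in a finite set X of size at most L, and a partition of [1,T] into K consecutive episodes with lengths T_1,...,T_K each at most T̄. For x ∈ X, let ν_k(x) be the number of occurrences of x in episode k and N_k(x) the number of occurrences before episode k. Then Σ_{x∈X} Σ_{k=1}^K ν_k(x)/sqrt(max{1, N_k(x)}) ≤ 2L T̄ + (2+√2) sqrt(L T). -/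
/-!
Fix a symbol and split the episodes according to whether the prior count `N_k` is at most the
count `ν_k` within the episode. The first kind all lie before the last of them, `k₀`, so together
they contribute at most `N_{k₀} + ν_{k₀} ≤ 2 ν_{k₀} ≤ 2 T̄`. In the second kind `N_{k+1} ≤ 2 N_k`,
whence `ν_k / √N_k ≤ (1 + √2) (√N_{k+1} - √N_k)`, and these terms telescope to `(1 + √2) √N`.
Summing over the symbols, Cauchy–Schwarz bounds `∑ₓ √N(x)` by `√(L T)`.
-/

open Finset

theorem div_sqrt_le_one_add_sqrt_two_mul_sqrt_add_sub_sqrt {n g : ℝ} (hg : 0 ≤ g) (hgn : g ≤ n) :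
    g / √n ≤ (1 + √2) * (√(n + g) - √n) := by
  rcases (hg.trans hgn).eq_or_lt with rfl | hn
  · obtain rfl : g = 0 := le_antisymm hgn hg
    simp
  have hmono : √n ≤ √(n + g) := Real.sqrt_le_sqrt (by linarith)
  have hdoubling : √(n + g) ≤ √2 * √n := by
    rw [← Real.sqrt_mul zero_le_two]
    exact Real.sqrt_le_sqrt (by linarith)
  rw [div_le_iff₀ (Real.sqrt_pos.mpr hn)]
  calc g = (√(n + g) - √n) * (√(n + g) + √n) := by
        rw [mul_comm, ← sq_sub_sq, Real.sq_sqrt (by linarith), Real.sq_sqrt hn.le]; ring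
    _ ≤ (√(n + g) - √n) * ((1 + √2) * √n) :=
        mul_le_mul_of_nonneg_left (by linarith) (sub_nonneg.mpr hmono)
    _ = (1 + √2) * (√(n + g) - √n) * √n := by ring

section PartialSums

variable {K Tbar : ℕ} (ν : ℕ → ℕ)

theorem sum_filter_partialSum_le_self_le_two_mul (hν : ∀ k < K, ν k ≤ Tbar) :
    ∑ k ∈ (range K).filter (fun k => ∑ j ∈ range k, ν j ≤ ν k), ν k ≤ 2 * Tbar := by
  set S := (range K).filter (fun k => ∑ j ∈ range k, ν j ≤ ν k)
  rcases S.eq_empty_or_nonempty with hS | hS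
  · simp [hS]
  obtain ⟨hk₀K, hk₀⟩ := mem_filter.mp (S.max'_mem hS)
  calc ∑ k ∈ S, ν k
      ≤ ∑ k ∈ range (S.max' hS + 1), ν k :=
        sum_le_sum_of_subset (fun k hk => mem_range_succ_iff.mpr (S.le_max' k hk))
    _ = ∑ k ∈ range (S.max' hS), ν k + ν (S.max' hS) := sum_range_succ _ _
    _ ≤ 2 * Tbar := by linarith [hν _ (mem_range.mp hk₀K)]

theorem sum_filter_self_lt_partialSum_div_sqrt_le :
    ∑ k ∈ (range K).filter (fun k => ¬ ∑ j ∈ range k, ν j ≤ ν k),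
        (ν k : ℝ) / √(max 1 (∑ j ∈ range k, ν j : ℕ))
      ≤ (1 + √2) * √(∑ j ∈ range K, ν j : ℕ) := by
  set N : ℕ → ℝ := fun k => √(∑ j ∈ range k, ν j : ℕ)
  have hN_mono : ∀ k, N k ≤ N (k + 1) := fun k =>
    Real.sqrt_le_sqrt (by exact_mod_cast sum_le_sum_of_subset (range_subset_range.mpr k.le_succ))
  have hterm : ∀ k ∈ (range K).filter (fun k => ¬ ∑ j ∈ range k, ν j ≤ ν k),
      (ν k : ℝ) / √(max 1 (∑ j ∈ range k, ν j : ℕ)) ≤ (1 + √2) * (N (k + 1) - N k) := by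
    intro k hk
    have hlt : ν k < ∑ j ∈ range k, ν j := not_le.mp (mem_filter.mp hk).2
    have hone : (1 : ℝ) ≤ (∑ j ∈ range k, ν j : ℕ) := by exact_mod_cast hlt.pos
    simp only [N, max_eq_right hone, sum_range_succ, Nat.cast_add]
    exact div_sqrt_le_one_add_sqrt_two_mul_sqrt_add_sub_sqrt (by positivity)
      (by exact_mod_cast hlt.le)
  calc _ ≤ ∑ k ∈ (range K).filter (fun k => ¬ ∑ j ∈ range k, ν j ≤ ν k),
        (1 + √2) * (N (k + 1) - N k) := sum_le_sum hterm
    _ ≤ ∑ k ∈ range K, (1 + √2) * (N (k + 1) - N k) :=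
        sum_le_sum_of_subset_of_nonneg (filter_subset _ _)
          fun k _ _ => mul_nonneg (by positivity) (sub_nonneg.mpr (hN_mono k))
    _ = (1 + √2) * N K := by rw [← mul_sum, sum_range_sub, show N 0 = 0 by simp [N], sub_zero]

theorem sum_div_sqrt_max_one_partialSum_le (hν : ∀ k < K, ν k ≤ Tbar) :
    ∑ k ∈ range K, (ν k : ℝ) / √(max 1 (∑ j ∈ range k, ν j : ℕ))
      ≤ 2 * Tbar + (1 + √2) * √(∑ j ∈ range K, ν j : ℕ) := by
  rw [← sum_filter_add_sum_filter_not (range K) (fun k => ∑ j ∈ range k, ν j ≤ ν k)]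
  have hearly : ∑ k ∈ (range K).filter (fun k => ∑ j ∈ range k, ν j ≤ ν k),
      (ν k : ℝ) / √(max 1 (∑ j ∈ range k, ν j : ℕ)) ≤ 2 * Tbar := by
    calc _ ≤ ∑ k ∈ (range K).filter (fun k => ∑ j ∈ range k, ν j ≤ ν k), (ν k : ℝ) :=
          sum_le_sum fun k _ => div_le_self (Nat.cast_nonneg _)
            (Real.one_le_sqrt.mpr (le_max_left _ _))
      _ ≤ 2 * Tbar := by exact_mod_cast sum_filter_partialSum_le_self_le_two_mul ν hν
  linarith [sum_filter_self_lt_partialSum_div_sqrt_le (K := K) ν]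

end PartialSums

theorem sum_range_sum_eq_sum_sum_Ico {M : Type*} [AddCommMonoid M] (f : ℕ → M) (len : ℕ → ℕ)
    (k : ℕ) :
    ∑ t ∈ range (∑ j ∈ range k, len j), f t
      = ∑ j ∈ range k, ∑ t ∈ Ico (∑ i ∈ range j, len i) (∑ i ∈ range j, len i + len j), f t := by
  induction k with
  | zero => simp
  | succ k ih =>
    rw [sum_range_succ len, ← sum_range_add_sum_Ico f (Nat.le_add_right _ _), ih, sum_range_succ]

theorem card_filter_range_sum_eq_sum_card_filter_Ico (p : ℕ → Prop) [DecidablePred p]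
    (len : ℕ → ℕ) (k : ℕ) :
    #((range (∑ j ∈ range k, len j)).filter p)
      = ∑ j ∈ range k, #((Ico (∑ i ∈ range j, len i) (∑ i ∈ range j, len i + len j)).filter p) := by
  simp only [card_filter]
  exact sum_range_sum_eq_sum_sum_Ico _ len k

theorem sum_sqrt_le_sqrt_card_mul_sum {ι : Type*} (s : Finset ι) {f : ι → ℝ}
    (hf : ∀ i, 0 ≤ f i) :
    ∑ i ∈ s, √(f i) ≤ √(#s * ∑ i ∈ s, f i) := by
  simpa [Real.sqrt_mul (Nat.cast_nonneg _)] using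
    Real.sum_sqrt_mul_sqrt_le s (f := 1) (fun _ => zero_le_one) hf

/-- deterministic counting lemma: for a sequence in a set of size
at most L, partitioned into K consecutive episodes of length at most T̄,
Σ_{x} Σ_k ν_k(x)/√(max 1 N_k(x)) ≤ 2L T̄ + (2+√2)√(LT). -/
theorem episodic_count_bound {X : Type*} [Fintype X] [DecidableEq X]
    (L T K Tbar : ℕ) (hL : Fintype.card X ≤ L)
    (x : ℕ → X) (Tlen : ℕ → ℕ)
    (hsum : ∑ k ∈ Finset.range K, Tlen k = T)
    (hTbar : ∀ k < K, Tlen k ≤ Tbar) :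
    (∑ a : X, ∑ k ∈ Finset.range K,
        (((Finset.Ico (∑ j ∈ Finset.range k, Tlen j)
            ((∑ j ∈ Finset.range k, Tlen j) + Tlen k)).filter
              (fun t => x t = a)).card : ℝ) /
          Real.sqrt (max 1
            (((Finset.range (∑ j ∈ Finset.range k, Tlen j)).filter
              (fun t => x t = a)).card)))
      ≤ 2 * L * Tbar + (2 + Real.sqrt 2) * Real.sqrt (L * T) := by
  set ν : X → ℕ → ℕ := fun a k =>
    #((Ico (∑ j ∈ range k, Tlen j) (∑ j ∈ range k, Tlen j + Tlen k)).filter (x · = a))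
  have hbefore (a : X) (k : ℕ) : #((range (∑ j ∈ range k, Tlen j)).filter (x · = a))
      = ∑ j ∈ range k, ν a j :=
    card_filter_range_sum_eq_sum_card_filter_Ico _ Tlen k
  have hν (a : X) : ∀ k < K, ν a k ≤ Tbar := fun k hk =>
    (card_filter_le _ _).trans (by simpa using hTbar k hk)
  have htotal : ∑ a, ((∑ j ∈ range K, ν a j : ℕ) : ℝ) = T := by
    simp only [← hbefore, hsum]
    exact_mod_cast (card_eq_sum_card_fiberwise (f := x) (t := univ) (by simp)).symm.trans
      (card_range T)
  have hcard : (Fintype.card X : ℝ) ≤ L := by exact_mod_cast hL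
  calc _ = ∑ a, ∑ k ∈ range K, (ν a k : ℝ) / √(max 1 (∑ j ∈ range k, ν a j : ℕ)) := by
        simp only [hbefore, ν]
    _ ≤ ∑ a : X, (2 * Tbar + (1 + √2) * √(∑ j ∈ range K, ν a j : ℕ)) :=
        sum_le_sum fun a _ => sum_div_sqrt_max_one_partialSum_le (ν a) (hν a)
    _ = Fintype.card X * (2 * Tbar) + (1 + √2) * ∑ a : X, √(∑ j ∈ range K, ν a j : ℕ) := by
        rw [sum_add_distrib, sum_const, card_univ, nsmul_eq_mul, mul_sum]
    _ ≤ L * (2 * Tbar) + (1 + √2) * √(L * T) := by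
        gcongr
        calc _ ≤ √(#(univ : Finset X) * ∑ a : X, ((∑ j ∈ range K, ν a j : ℕ) : ℝ)) :=
              sum_sqrt_le_sqrt_card_mul_sum _ fun _ => Nat.cast_nonneg _
          _ ≤ √(L * T) := by rw [htotal, card_univ]; gcongr
    _ ≤ 2 * L * Tbar + (2 + √2) * √(L * T) := by
        nlinarith [Real.sqrt_nonneg (L * T)]
end

section
/- For a single element x observed n_1, n_2, ..., n_K times across K episodes (with Σ n_k = N total), writing N_k = Σ_{j<k} n_j, if N_k > n_k for all k > k_0 then Σ_{k > k_0} n_k / sqrt(max{N_k, 1}) ≤ (2+√2) sqrt(N). -/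
/-!
Each term is charged to the growth of `√N_k`: when `n_k ≤ N_k` we have `N_{k+1} = N_k + n_k ≤ 2 N_k`,
so `n_k / √N_k = (√N_{k+1} - √N_k) (√N_{k+1} + √N_k) / √N_k ≤ (1 + √2) (√N_{k+1} - √N_k)`.
These increments telescope to at most `√N`, which gives even the constant `1 + √2`.
-/

open Finset Real

theorem div_sqrt_le_one_add_sqrt_two_mul_sub {a b : ℝ} (ha : 0 < a) (hb : 0 ≤ b) (hba : b ≤ a) :
    b / √a ≤ (1 + √2) * (√(a + b) - √a) := by
  have hx : 0 < √a := sqrt_pos.mpr ha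
  have hxy : √a ≤ √(a + b) := sqrt_le_sqrt (by linarith)
  have hy : √(a + b) ≤ √2 * √a := by
    rw [← sqrt_mul zero_le_two]; exact sqrt_le_sqrt (by linarith)
  have hb_eq : b = (√(a + b) - √a) * (√(a + b) + √a) := by
    linear_combination -sq_sqrt (by linarith : 0 ≤ a + b) + sq_sqrt ha.le
  rw [div_le_iff₀ hx]
  nlinarith [mul_nonneg (sub_nonneg.mpr hxy) (sub_nonneg.mpr hy)]

/-- for counts n_1,...,n_K with partial sums N_k = Σ_{j<k} n_j
and total N = Σ_{k=1}^K n_k, if N_k > n_k for all k > k_0 then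
Σ_{k > k_0} n_k/√(max{N_k,1}) ≤ (2+√2)√N. -/
theorem single_element_count_bound (K k0 : ℕ) (n : ℕ → ℕ)
    (hdom : ∀ k, k0 < k → k ≤ K → n k < ∑ j ∈ Finset.Ico 1 k, n j) :
    ∑ k ∈ Finset.Icc (k0 + 1) K,
        (n k : ℝ) / Real.sqrt (max (∑ j ∈ Finset.Ico 1 k, n j) 1)
      ≤ (2 + Real.sqrt 2) * Real.sqrt (∑ k ∈ Finset.Icc 1 K, n k) := by
  rcases lt_or_ge K (k0 + 1) with hK | hK
  · rw [Icc_eq_empty_of_lt hK, sum_empty]; positivity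
  set S : ℕ → ℝ := fun k ↦ ∑ j ∈ Ico 1 k, (n j : ℝ) with hS
  have hterm : ∀ k ∈ Icc (k0 + 1) K,
      (n k : ℝ) / √(max (S k) 1) ≤ (1 + √2) * (√(S (k + 1)) - √(S k)) := by
    intro k hk
    obtain ⟨hk0, hkK⟩ := mem_Icc.mp hk
    have hnS : (n k : ℝ) + 1 ≤ S k := by simp only [hS]; exact_mod_cast hdom k hk0 hkK
    have hS_succ : S (k + 1) = S k + n k := sum_Ico_succ_top (by omega) _
    have hn0 : (0 : ℝ) ≤ n k := (n k).cast_nonneg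
    rw [max_eq_left (by linarith), hS_succ]
    exact div_sqrt_le_one_add_sqrt_two_mul_sub (by linarith) hn0 (by linarith)
  have hS_total : S (K + 1) = ∑ k ∈ Icc 1 K, (n k : ℝ) := by
    simp only [hS, Ico_add_one_right_eq_Icc]
  calc ∑ k ∈ Icc (k0 + 1) K, (n k : ℝ) / √(max (S k) 1)
      ≤ ∑ k ∈ Icc (k0 + 1) K, (1 + √2) * (√(S (k + 1)) - √(S k)) := sum_le_sum hterm
    _ = (1 + √2) * (√(S (K + 1)) - √(S (k0 + 1))) := by
      rw [← mul_sum, sum_Icc_sub hK (fun k ↦ √(S k))]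
    _ ≤ (2 + √2) * √(∑ k ∈ Icc 1 K, (n k : ℝ)) := by
      rw [← hS_total]
      nlinarith [sqrt_nonneg (S (K + 1)), sqrt_nonneg (S (k0 + 1)), sqrt_nonneg 2]
end

section
/- Let P and P̃ be product distributions on S = S_1 × ... × S_m with factors P_i and P̃_i, and let h : S → ℝ with factored spans sp_1, ..., sp_m (sp_i = max over s_{-i} of the span of h(·, s_{-i}) in coordinate i). Then |Σ_s (P̃(s) - P(s)) h(s)| ≤ Σ_{i=1}^m ‖P_i - P̃_i‖_1 · sp_i. -/
lemma onedim {α : Type*} [Fintype α] [Nonempty α] (p q g : α → ℝ)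
    (hp1 : ∑ x, p x = 1) (hq1 : ∑ x, q x = 1) :
    |∑ x, (q x - p x) * g x| ≤ (∑ x, |p x - q x|) * ((⨆ x, g x) - ⨅ x, g x) := by
  have hbddA : BddAbove (Set.range g) := Set.Finite.bddAbove (Set.finite_range g)
  have hbddB : BddBelow (Set.range g) := Set.Finite.bddBelow (Set.finite_range g)
  have key : ∑ x, (q x - p x) * g x = ∑ x, (q x - p x) * (g x - ⨅ y, g y) := by
    simp [mul_sub, Finset.sum_sub_distrib, ← Finset.sum_mul, hp1, hq1]
  rw [key]
  calc |∑ x, (q x - p x) * (g x - ⨅ y, g y)|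
      ≤ ∑ x, |(q x - p x) * (g x - ⨅ y, g y)| := Finset.abs_sum_le_sum_abs _ _
    _ ≤ ∑ x, |p x - q x| * ((⨆ x, g x) - ⨅ x, g x) := by
        apply Finset.sum_le_sum
        intro x _
        rw [abs_mul, abs_sub_comm (q x)]
        apply mul_le_mul_of_nonneg_left _ (abs_nonneg _)
        rw [abs_of_nonneg (sub_nonneg.2 (ciInf_le hbddB x))]
        exact sub_le_sub_right (le_ciSup hbddA x) _
    _ = _ := by rw [← Finset.sum_mul]

lemma merge_eq {m : ℕ} (S : Fin m → Type*) (k : Fin m) (x : S k)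
    (t : ∀ j : {j // j ≠ k}, S j) (s : ∀ i, S i)
    (hs : s = (Equiv.piSplitAt k S).symm (x, t)) (x' : S k) :
    (Equiv.piSplitAt k S).symm (x', t) = Function.update s k x' := by
  subst hs
  funext i
  by_cases hik : i = k
  · subst hik
    simp [Equiv.piSplitAt, Function.update]
  · simp [Equiv.piSplitAt, Function.update, hik]

lemma step {m : ℕ} (S : Fin m → Type*) [∀ i, Fintype (S i)] [∀ i, Nonempty (S i)]
    (k : Fin m) (c : ∀ i, S i → ℝ)
    (hc0 : ∀ i x, 0 ≤ c i x) (hc1 : ∀ i, ∑ x, c i x = 1)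
    (p q : S k → ℝ) (hp1 : ∑ x, p x = 1) (hq1 : ∑ x, q x = 1)
    (h : (∀ i, S i) → ℝ) :
    |∑ s : ∀ i, S i, (∏ i ∈ Finset.univ.erase k, c i (s i)) * ((q (s k) - p (s k)) * h s)|
      ≤ (∑ x, |p x - q x|) *
        ⨆ s : ∀ j, S j, ((⨆ x, h (Function.update s k x)) - ⨅ x, h (Function.update s k x)) := by
  classical
  set e := Equiv.piSplitAt k S with he
  set L1 := ∑ x, |p x - q x| with hL1
  set Sp := ⨆ s : ∀ j, S j, ((⨆ x, h (Function.update s k x)) - ⨅ x, h (Function.update s k x))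
    with hSp
  have hL1nn : 0 ≤ L1 := Finset.sum_nonneg fun x _ => abs_nonneg _
  have hbddSp : BddAbove (Set.range fun s : ∀ j, S j =>
      ((⨆ x, h (Function.update s k x)) - ⨅ x, h (Function.update s k x))) :=
    Set.Finite.bddAbove (Set.finite_range _)
  have hre : ∑ s : ∀ i, S i, (∏ i ∈ Finset.univ.erase k, c i (s i)) * ((q (s k) - p (s k)) * h s)
      = ∑ t : ∀ j : {j // j ≠ k}, S j, ∑ x : S k,
          (∏ i ∈ Finset.univ.erase k, c i ((e.symm (x, t)) i)) *
            ((q ((e.symm (x, t)) k) - p ((e.symm (x, t)) k)) * h (e.symm (x, t))) := by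
    rw [← Equiv.sum_comp e.symm, Fintype.sum_prod_type, Finset.sum_comm]
  rw [hre]
  -- weights
  set a : S k := Classical.arbitrary (S k) with ha
  set w : (∀ j : {j // j ≠ k}, S j) → ℝ :=
    fun t => ∏ i ∈ Finset.univ.erase k, c i ((e.symm (a, t)) i) with hw
  have hwsub : ∀ t, w t = ∏ j : {j // j ≠ k}, c j (t j) := by
    intro t
    show (∏ i ∈ Finset.univ.erase k, c i ((e.symm (a, t)) i)) = _
    rw [Finset.prod_subtype (Finset.univ.erase k)
      (p := fun j => j ≠ k) (fun x => by simp) (fun i => c i ((e.symm (a, t)) i))]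
    apply Finset.prod_congr rfl
    intro j _
    congr 1
    simp [he, Equiv.piSplitAt, j.2]
  have hwnn : ∀ t, 0 ≤ w t := fun t => Finset.prod_nonneg fun i _ => hc0 _ _
  have hwsum : ∑ t, w t = 1 := by
    simp only [hwsub]
    rw [← Fintype.piFinset_univ, ← Finset.prod_univ_sum]
    simp [hc1]
  calc |∑ t : ∀ j : {j // j ≠ k}, S j, ∑ x : S k,
          (∏ i ∈ Finset.univ.erase k, c i ((e.symm (x, t)) i)) *
            ((q ((e.symm (x, t)) k) - p ((e.symm (x, t)) k)) * h (e.symm (x, t)))|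
      ≤ ∑ t : ∀ j : {j // j ≠ k}, S j, |∑ x : S k,
          (∏ i ∈ Finset.univ.erase k, c i ((e.symm (x, t)) i)) *
            ((q ((e.symm (x, t)) k) - p ((e.symm (x, t)) k)) * h (e.symm (x, t)))| :=
        Finset.abs_sum_le_sum_abs _ _
    _ ≤ ∑ t, w t * (L1 * Sp) := by
        apply Finset.sum_le_sum
        intro t _
        set s₀ : ∀ i, S i := e.symm (a, t) with hs₀
        have hup : ∀ x' : S k, e.symm (x', t) = Function.update s₀ k x' :=
          merge_eq S k a t s₀ rfl
        have hprodc : ∀ x : S k,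
            (∏ i ∈ Finset.univ.erase k, c i (Function.update s₀ k x i)) = w t := by
          intro x
          rw [← hup x]
          show _ = ∏ i ∈ Finset.univ.erase k, c i ((e.symm (a, t)) i)
          refine Finset.prod_congr rfl fun i hi => ?_
          rw [hup x, hup a, Function.update_of_ne (Finset.mem_erase.1 hi).1,
            Function.update_of_ne (Finset.mem_erase.1 hi).1]
        simp only [hup, Function.update_self, hprodc]
        rw [← Finset.mul_sum, abs_mul, abs_of_nonneg (hwnn t)]
        apply mul_le_mul_of_nonneg_left _ (hwnn t)
        calc |∑ x, (q x - p x) * h (Function.update s₀ k x)|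
            ≤ L1 * ((⨆ x, h (Function.update s₀ k x)) - ⨅ x, h (Function.update s₀ k x)) :=
              onedim p q _ hp1 hq1
          _ ≤ L1 * Sp := mul_le_mul_of_nonneg_left (le_ciSup hbddSp s₀) hL1nn
    _ = L1 * Sp := by rw [← Finset.sum_mul, hwsum, one_mul]

/-- key deviation bound of the FSRL analysis: for product
distributions P, P̃ and a function h with factored spans sp_i,
|Σ_s (P̃(s) - P(s)) h(s)| ≤ Σ_i ‖P_i - P̃_i‖₁ · sp_i. -/
theorem deviation_bound_factored_span {m : ℕ} (S : Fin m → Type*)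
    [∀ i, Fintype (S i)] [∀ i, Nonempty (S i)]
    (P Pt : ∀ i, S i → ℝ)
    (hP0 : ∀ i x, 0 ≤ P i x) (hP1 : ∀ i, ∑ x, P i x = 1)
    (hPt0 : ∀ i x, 0 ≤ Pt i x) (hPt1 : ∀ i, ∑ x, Pt i x = 1)
    (h : (∀ i, S i) → ℝ) :
    |∑ s : ∀ i, S i, ((∏ i, Pt i (s i)) - ∏ i, P i (s i)) * h s|
      ≤ ∑ i : Fin m, (∑ x : S i, |P i x - Pt i x|) *
          ⨆ s : ∀ j, S j,
            ((⨆ x : S i, h (Function.update s i x)) -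
              ⨅ x : S i, h (Function.update s i x)) := by
  classical
  set W : ℕ → ∀ i, S i → ℝ := fun n i x => if (i : ℕ) < n then Pt i x else P i x with hW
  set T : ℕ → ℝ := fun n => ∑ s : ∀ i, S i, (∏ i, W n i (s i)) * h s with hT
  have hT0 : T 0 = ∑ s : ∀ i, S i, (∏ i, P i (s i)) * h s := by simp [hT, hW]
  have hTm : T m = ∑ s : ∀ i, S i, (∏ i, Pt i (s i)) * h s := by
    simp [hT, hW, Fin.is_lt]
  have hdiff : ∑ s : ∀ i, S i, ((∏ i, Pt i (s i)) - ∏ i, P i (s i)) * h s = T m - T 0 := by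
    rw [hT0, hTm, ← Finset.sum_sub_distrib]
    exact Finset.sum_congr rfl fun s _ => by ring
  rw [hdiff, ← Finset.sum_range_sub T m,
    ← Fin.sum_univ_eq_sum_range (fun n => T (n + 1) - T n) m]
  refine le_trans (Finset.abs_sum_le_sum_abs _ _) (Finset.sum_le_sum fun k _ => ?_)
  have hc0 : ∀ i x, 0 ≤ W k i x := fun i x => by
    simp only [hW]; split_ifs with hh
    · exact hPt0 i x
    · exact hP0 i x
  have hc1 : ∀ i, ∑ x, W k i x = 1 := fun i => by
    simp only [hW]; split_ifs with hh
    · exact hPt1 i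
    · exact hP1 i
  have hsplit : ∀ s : ∀ i, S i,
      (∏ i, W (↑k + 1) i (s i)) - ∏ i, W (↑k) i (s i)
        = (∏ i ∈ Finset.univ.erase k, W (↑k) i (s i)) * ((Pt k (s k) - P k (s k))) := by
    intro s
    have he : ∀ i ∈ Finset.univ.erase k, W (↑k + 1) i (s i) = W (↑k) i (s i) := by
      intro i hi
      have hne : (i : ℕ) ≠ (k : ℕ) := fun hval =>
        (Finset.mem_erase.1 hi).1 (Fin.ext hval)
      simp only [hW]
      have : ((i : ℕ) < (k : ℕ) + 1) ↔ ((i : ℕ) < (k : ℕ)) := by omega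
      simp only [this]
    rw [← Finset.mul_prod_erase Finset.univ (fun i => W (↑k + 1) i (s i)) (Finset.mem_univ k),
      ← Finset.mul_prod_erase Finset.univ (fun i => W (↑k) i (s i)) (Finset.mem_univ k),
      Finset.prod_congr rfl he]
    have h1 : W (↑k + 1) k (s k) = Pt k (s k) := by simp [hW]
    have h2 : W (↑k) k (s k) = P k (s k) := by simp [hW]
    rw [h1, h2]; ring
  have hTd : T (↑k + 1) - T (↑k)
      = ∑ s : ∀ i, S i, (∏ i ∈ Finset.univ.erase k, W (↑k) i (s i)) *
          ((Pt k (s k) - P k (s k)) * h s) := by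
    rw [← Finset.sum_sub_distrib]
    refine Finset.sum_congr rfl fun s _ => ?_
    rw [← sub_mul, hsplit s, mul_assoc]
  rw [hTd]
  exact step S k (W ↑k) hc0 hc1 (P k) (Pt k) (hP1 k) (hPt1 k) h
end

section
/- Let M⁺ be the Cartesian product of n independent MDPs whose optimal policies have bias vectors h_1, ..., h_n. Then the bias vector of the product optimal policy satisfies h⁺(s) = Σ_i h_i(s_i) and hence sp(h⁺) = Σ_i sp(h_i). -/
/-- A finite Markov decision process with transition kernel `P` and
(deterministic) reward function `r`. -/
structure MDP (S A : Type*) where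
  P : S → A → S → ℝ
  r : S → A → ℝ

namespace MDP

variable {S A : Type*} [Fintype S] [DecidableEq S]

/-- All rows of the transition kernel are probability distributions. -/
def IsStochastic (M : MDP S A) : Prop :=
  ∀ s a, (∀ s', 0 ≤ M.P s a s') ∧ ∑ s', M.P s a s' = 1

/-- Distribution of the state after `t` steps of policy `π` started at `s0`. -/
noncomputable def distAt (M : MDP S A) (π : S → A) (s0 : S) : ℕ → S → ℝ
  | 0 => fun s => if s = s0 then 1 else 0
  | t + 1 => fun s' => ∑ s, distAt M π s0 t s * M.P s (π s) s'

/-- Expected reward collected at step `t` (0-indexed) under policy `π`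
started at `s0`. -/
noncomputable def expReward (M : MDP S A) (π : S → A) (s0 : S) (t : ℕ) : ℝ :=
  ∑ s, M.distAt π s0 t s * M.r s (π s)

/-- `h` is a bias vector of policy `π` for gain `lam`:
h(s) = Σ_{t=1}^∞ (E[r_t] - lam), the series converging. -/
def IsBias (M : MDP S A) (π : S → A) (lam : ℝ) (h : S → ℝ) : Prop :=
  ∀ s, HasSum (fun t : ℕ => M.expReward π s t - lam) (h s)

end MDP

/-- Cartesian product of independent MDPs. -/
noncomputable def prodMDP {n : ℕ} (S A : Fin n → Type*) [∀ i, Fintype (S i)]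
    (M : ∀ i, MDP (S i) (A i)) : MDP (∀ i, S i) (∀ i, A i) where
  P := fun s a s' => ∏ i, (M i).P (s i) (a i) (s' i)
  r := fun s a => ∑ i, (M i).r (s i) (a i)

lemma sum_distAt {S A : Type*} [Fintype S] [DecidableEq S] (M : MDP S A)
    (hM : M.IsStochastic) (π : S → A) (s0 : S) (t : ℕ) :
    ∑ s, M.distAt π s0 t s = 1 := by
  induction t with
  | zero => simp [MDP.distAt]
  | succ t ih =>
    simp only [MDP.distAt]
    rw [Finset.sum_comm]
    simp_rw [← Finset.mul_sum]
    simp [(hM _ _).2, ih]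

lemma distAt_prod {n : ℕ} (S A : Fin n → Type*) [∀ i, Fintype (S i)]
    [∀ i, DecidableEq (S i)] (M : ∀ i, MDP (S i) (A i)) (π : ∀ i, S i → A i)
    (s0 : ∀ i, S i) (t : ℕ) (s : ∀ i, S i) :
    (prodMDP S A M).distAt (fun s i => π i (s i)) s0 t s
      = ∏ i, (M i).distAt (π i) (s0 i) t (s i) := by
  induction t generalizing s with
  | zero =>
    simp only [MDP.distAt]
    by_cases hs : s = s0
    · subst hs; simp
    · rw [if_neg hs]
      obtain ⟨i, hi⟩ : ∃ i, s i ≠ s0 i := by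
        by_contra hc; push_neg at hc; exact hs (funext hc)
      exact (Finset.prod_eq_zero (Finset.mem_univ i) (by simp [hi])).symm
  | succ t ih =>
    simp only [MDP.distAt]
    simp_rw [ih]
    simp only [prodMDP]
    rw [Finset.prod_univ_sum, Fintype.piFinset_univ]
    exact Finset.sum_congr rfl fun x _ => Finset.prod_mul_distrib.symm

lemma expReward_prod {n : ℕ} (S A : Fin n → Type*) [∀ i, Fintype (S i)]
    [∀ i, DecidableEq (S i)] (M : ∀ i, MDP (S i) (A i)) (hM : ∀ i, (M i).IsStochastic)
    (π : ∀ i, S i → A i) (s0 : ∀ i, S i) (t : ℕ) :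
    (prodMDP S A M).expReward (fun s i => π i (s i)) s0 t
      = ∑ i, (M i).expReward (π i) (s0 i) t := by
  unfold MDP.expReward
  simp only [distAt_prod]
  simp only [prodMDP, Finset.mul_sum]
  rw [Finset.sum_comm]
  refine Finset.sum_congr rfl fun i _ => ?_
  have key : ∀ s : ∀ j, S j,
      (∏ j, (M j).distAt (π j) (s0 j) t (s j)) * (M i).r (s i) (π i (s i))
      = ∏ j, ((M j).distAt (π j) (s0 j) t (s j) *
          (if hji : j = i then (M i).r (hji ▸ s j) (π i (hji ▸ s j)) else 1)) := by
    intro s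
    rw [Finset.prod_mul_distrib]
    congr 1
    rw [Finset.prod_eq_single i (fun j _ hj => dif_neg hj) (by simp), dif_pos rfl]
  simp_rw [key]
  have hp := Finset.prod_univ_sum (fun _ : Fin n => (Finset.univ : Finset _))
    (fun j (y : S j) => (M j).distAt (π j) (s0 j) t y *
      if hji : j = i then (M i).r (hji ▸ y) (π i (hji ▸ y)) else 1)
  rw [← Fintype.piFinset_univ, ← hp]
  rw [Finset.prod_eq_single i
    (fun j _ hj => by
      simp only [dif_neg hj, mul_one]
      exact sum_distAt _ (hM j) _ _ _)
    (by simp)]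
  refine Finset.sum_congr rfl fun y _ => ?_
  rw [dif_pos rfl]

lemma ciSup_pi_sum {n : ℕ} (S : Fin n → Type*) [∀ i, Fintype (S i)] [∀ i, Nonempty (S i)]
    (h : ∀ i, S i → ℝ) :
    (⨆ s : ∀ i, S i, ∑ i, h i (s i)) = ∑ i, ⨆ x, h i x := by
  refine le_antisymm (ciSup_le fun s => Finset.sum_le_sum fun i _ =>
    le_ciSup (f := h i) (Set.Finite.bddAbove (Set.finite_range _)) (s i)) ?_
  choose x hx using fun i => Finite.exists_max (h i)
  have hx' : ∑ i, (⨆ y, h i y) = ∑ i, h i (x i) :=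
    Finset.sum_congr rfl fun i _ => le_antisymm (ciSup_le (hx i))
      (le_ciSup (f := h i) (Set.Finite.bddAbove (Set.finite_range (h i))) (x i))
  rw [hx']
  exact le_ciSup (f := fun s : ∀ i, S i => ∑ i, h i (s i)) (Set.Finite.bddAbove (Set.finite_range _)) x

lemma ciInf_pi_sum {n : ℕ} (S : Fin n → Type*) [∀ i, Fintype (S i)] [∀ i, Nonempty (S i)]
    (h : ∀ i, S i → ℝ) :
    (⨅ s : ∀ i, S i, ∑ i, h i (s i)) = ∑ i, ⨅ x, h i x := by
  refine le_antisymm ?_ (le_ciInf fun s => Finset.sum_le_sum fun i _ =>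
    ciInf_le (f := h i) (Set.Finite.bddBelow (Set.finite_range _)) (s i))
  choose x hx using fun i => Finite.exists_min (h i)
  have hx' : ∑ i, (⨅ y, h i y) = ∑ i, h i (x i) :=
    Finset.sum_congr rfl fun i _ => le_antisymm
      (ciInf_le (f := h i) (Set.Finite.bddBelow (Set.finite_range _)) (x i)) (le_ciInf (hx i))
  rw [hx']
  exact ciInf_le (f := fun s : ∀ i, S i => ∑ i, h i (s i)) (Set.Finite.bddBelow (Set.finite_range _)) x

/-- for a Cartesian product of independent MDPs whose
(optimal) policies have gains λ_i and bias vectors h_i, the product policy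
has bias vector h⁺(s) = Σ_i h_i(s_i), and hence sp(h⁺) = Σ_i sp(h_i). -/
theorem bias_prodMDP {n : ℕ} (S A : Fin n → Type*)
    [∀ i, Fintype (S i)] [∀ i, DecidableEq (S i)] [∀ i, Fintype (A i)]
    [∀ i, Nonempty (S i)] [∀ i, Nonempty (A i)]
    (M : ∀ i, MDP (S i) (A i)) (hM : ∀ i, (M i).IsStochastic)
    (π : ∀ i, S i → A i) (lam : Fin n → ℝ) (h : ∀ i, S i → ℝ)
    (hbias : ∀ i, (M i).IsBias (π i) (lam i) (h i)) :
    (prodMDP S A M).IsBias (fun s i => π i (s i)) (∑ i, lam i)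
        (fun s => ∑ i, h i (s i)) ∧
      (⨆ s : ∀ i, S i, ∑ i, h i (s i)) - (⨅ s : ∀ i, S i, ∑ i, h i (s i))
        = ∑ i, ((⨆ x : S i, h i x) - ⨅ x : S i, h i x) := by
  constructor
  · intro s
    have key : ∀ t, (prodMDP S A M).expReward (fun s i => π i (s i)) s t - ∑ i, lam i
        = ∑ i, ((M i).expReward (π i) (s i) t - lam i) := by
      intro t; rw [expReward_prod S A M hM, Finset.sum_sub_distrib]
    simp_rw [key]
    exact hasSum_sum fun i _ => hbias i (s i)
  · rw [ciSup_pi_sum, ciInf_pi_sum, ← Finset.sum_sub_distrib]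
end

section
/- Suppose stationary distribution row vector d (d ≥ 0, d·1 = 1, dP̃ = d) for transition matrix P̃, reward vectors R̃ ≥ R pointwise, scalar λ* and vector h satisfying the optimality equation λ*·1 + h = R + P h, and (P̃ - P) h ≥ 0 componentwise. Then the average reward of P̃, R̃, namely d·R̃, satisfies d·R̃ ≥ λ*. -/
/-- optimism computation (Corollary 1): if d is stationary for P̃,
R̃ ≥ R, (λ*, h) solve the Poisson equation for (P, R), and (P̃ - P)h ≥ 0, then
the average reward d·R̃ is at least λ*. -/
theorem optimistic_gain_ge {S : Type*} [Fintype S]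
    (d h R Rt : S → ℝ) (P Pt : S → S → ℝ) (lam : ℝ)
    (hd0 : ∀ s, 0 ≤ d s) (hd1 : ∑ s, d s = 1)
    (hstat : ∀ s', ∑ s, d s * Pt s s' = d s')
    (hR : ∀ s, R s ≤ Rt s)
    (hPoisson : ∀ s, lam + h s = R s + ∑ s', P s s' * h s')
    (hopt : ∀ s, 0 ≤ ∑ s', (Pt s s' - P s s') * h s') :
    lam ≤ ∑ s, d s * Rt s := by
  have hPth : ∑ s, d s * ∑ s', Pt s s' * h s' = ∑ s, d s * h s := by
    calc ∑ s, d s * ∑ s', Pt s s' * h s'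
        = ∑ s', (∑ s, d s * Pt s s') * h s' := by
          simp only [Finset.mul_sum, Finset.sum_mul]
          rw [Finset.sum_comm]
          apply Finset.sum_congr rfl; intros; apply Finset.sum_congr rfl; intros; ring
    _ = ∑ s, d s * h s := by
          simp only [hstat]
  have h1 : 0 ≤ ∑ s, d s * (Rt s - R s) :=
    Finset.sum_nonneg fun s _ => mul_nonneg (hd0 s) (by linarith [hR s])
  have h2 : 0 ≤ ∑ s, d s * ∑ s', (Pt s s' - P s s') * h s' :=
    Finset.sum_nonneg fun s _ => mul_nonneg (hd0 s) (hopt s)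
  have key : ∑ s, d s * Rt s - lam
      = (∑ s, d s * (Rt s - R s)) + ∑ s, d s * ∑ s', (Pt s s' - P s s') * h s' := by
    have : ∑ s, d s * lam = lam := by
      rw [← Finset.sum_mul, hd1, one_mul]
    calc ∑ s, d s * Rt s - lam
        = ∑ s, (d s * Rt s - d s * lam) := by
          rw [Finset.sum_sub_distrib, this]
    _ = ∑ s, (d s * (Rt s - R s) + d s * ∑ s', (Pt s s' - P s s') * h s'
          + (d s * h s - d s * ∑ s', Pt s s' * h s')) := by
          apply Finset.sum_congr rfl
          intro s _
          have hp := hPoisson s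
          have : ∑ s', (Pt s s' - P s s') * h s'
              = (∑ s', Pt s s' * h s') - ∑ s', P s s' * h s' := by
            rw [← Finset.sum_sub_distrib]; congr 1; ext s'; ring
          rw [this]
          have hl : lam = R s + (∑ s', P s s' * h s') - h s := by linarith
          rw [hl]; ring
    _ = (∑ s, d s * (Rt s - R s)) + ∑ s, d s * ∑ s', (Pt s s' - P s s') * h s' := by
          rw [Finset.sum_add_distrib, Finset.sum_add_distrib, Finset.sum_sub_distrib, hPth]
          ring
  linarith [key, h1, h2]
end
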